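/- arXiv:2405.07947 — 5 statements merged into one kernel-verified Lean document; each statement's English description precedes it below -/
import Mathlib

section
/- On the complete graph K_n, if an effective divisor D has rank zero, then for all i with 1 ≤ i ≤ n−1, the number of vertices v with D(v) ≥ i is strictly less than n−i. -/
open Finset

open scoped Classical

/-- A divisor is effective if it is nonnegative everywhere. -/
def Effective {V : Type*} (D : V → ℤ) : Prop := ∀ v, 0 ≤ D v

/-- The degree of a divisor: the total number of chips. -/
def degD {V : Type*} [Fintype V] (D : V → ℤ) : ℤ := ∑ v, D v

/-- The effect on a vertex `w` of firing each vertex `u` with multiplicity `f u`. -/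
noncomputable def lap {V : Type*} [Fintype V] (G : SimpleGraph V) (f : V → ℤ) (w : V) : ℤ :=
  (∑ u, f u * (if G.Adj u w then 1 else 0)) - f w * (∑ u, if G.Adj u w then (1 : ℤ) else 0)

/-- Two divisors are (chip-firing) equivalent if one is obtained from the other by a
sequence of chip-firing moves, i.e. they differ by a Laplacian of some `f : V → ℤ`. -/
def LinEquiv {V : Type*} [Fintype V] (G : SimpleGraph V) (D D' : V → ℤ) : Prop :=
  ∃ f : V → ℤ, ∀ w, D' w = D w + lap G f w

/-- A divisor has positive rank if for every vertex there is an equivalent effective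
divisor with a chip at that vertex. -/
def PositiveRank {V : Type*} [Fintype V] (G : SimpleGraph V) (D : V → ℤ) : Prop :=
  ∀ v, ∃ D', LinEquiv G D D' ∧ Effective D' ∧ 0 < D' v

/-- A Ferrers diagram: a finite subset of ℕ² with coordinates ≥ 1, closed under
decreasing either coordinate toward 1. -/
def IsFerrers (F : Finset (ℕ × ℕ)) : Prop :=
  ∀ p ∈ F, 1 ≤ p.1 ∧ 1 ≤ p.2 ∧ (p.1 = 1 ∨ (p.1 - 1, p.2) ∈ F) ∧ (p.2 = 1 ∨ (p.1, p.2 - 1) ∈ F)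

/-- The Ferrers rook graph: vertices are points of `F`, two distinct points adjacent
iff they share a row or a column. -/
def rookGraph (F : Finset (ℕ × ℕ)) : SimpleGraph {p // p ∈ F} where
  Adj a b := a ≠ b ∧ ((a : ℕ × ℕ).1 = (b : ℕ × ℕ).1 ∨ (a : ℕ × ℕ).2 = (b : ℕ × ℕ).2)
  symm := ⟨fun a b h => ⟨h.1.symm, h.2.imp Eq.symm Eq.symm⟩⟩
  loopless := ⟨fun a h => h.1 rfl⟩

/-- The set of degrees of positive-rank divisors on `R(F)`; its least element is the gonality. -/
def gonSet (F : Finset (ℕ × ℕ)) : Set ℤ :=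
  {d | ∃ D : {p // p ∈ F} → ℤ, PositiveRank (rookGraph F) D ∧ degD D = d}

/-- The divisor `D_{x,y}`: one chip on each vertex not in column `x` and not in row `y`. -/
def Dxy (F : Finset (ℕ × ℕ)) (x y : ℕ) : {p // p ∈ F} → ℤ :=
  fun p => if (p : ℕ × ℕ).1 ≠ x ∧ (p : ℕ × ℕ).2 ≠ y then 1 else 0

/-! If at least `n - i` vertices carry `i` or more chips, firing the set `S` of those vertices
costs each of them only `n - #S ≤ i` chips and gives every other vertex `#S ≥ 1` chips, so every
vertex can be reached by an effective equivalent divisor: `D` has positive rank. -/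

lemma lap_top {V : Type*} [Fintype V] (f : V → ℤ) (w : V) :
    lap (⊤ : SimpleGraph V) f w = ∑ u, f u - Fintype.card V * f w := by
  simp only [lap, SimpleGraph.top_adj, mul_ite, mul_one, mul_zero, sum_ite, sum_const_zero,
    add_zero, filter_ne', sum_erase_eq_sub (mem_univ w), sum_const, card_univ, nsmul_eq_mul]
  ring

lemma lap_top_indicator {V : Type*} [Fintype V] (S : Finset V) (w : V) :
    lap (⊤ : SimpleGraph V) (fun u => if u ∈ S then 1 else 0) w =
      #S - if w ∈ S then (Fintype.card V : ℤ) else 0 := by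
  simp [lap_top]

lemma linEquiv_add_lap {V : Type*} [Fintype V] (G : SimpleGraph V) (D f : V → ℤ) :
    LinEquiv G D (D + lap G f) :=
  ⟨f, fun _ => rfl⟩

lemma linEquiv_refl {V : Type*} [Fintype V] (G : SimpleGraph V) (D : V → ℤ) : LinEquiv G D D :=
  ⟨0, fun w => by simp [lap]⟩

theorem positiveRank_top_of_le_card_filter {V : Type*} [Fintype V] {D : V → ℤ} (hD : Effective D)
    {i : ℕ} (hi : 1 ≤ i) (hiV : i < Fintype.card V)
    (hS : Fintype.card V - i ≤ #(univ.filter fun v => (i : ℤ) ≤ D v)) :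
    PositiveRank (⊤ : SimpleGraph V) D := by
  set S := univ.filter fun v => (i : ℤ) ≤ D v
  intro v
  by_cases hv : v ∈ S
  · exact ⟨D, linEquiv_refl _ D, hD, by have := (mem_filter.mp hv).2; omega⟩
  refine ⟨D + lap ⊤ fun u => if u ∈ S then 1 else 0, linEquiv_add_lap _ _ _, fun w => ?_, ?_⟩
  · have := hD w
    by_cases hw : w ∈ S
    · have := (mem_filter.mp hw).2
      simp only [Pi.add_apply, lap_top_indicator, hw, if_true]
      omega
    · simp only [Pi.add_apply, lap_top_indicator, hw, if_false]
      omega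
  · have := hD v
    simp only [Pi.add_apply, lap_top_indicator, hv, if_false]
    omega

theorem stmt1 (n : ℕ) (D : Fin n → ℤ) (hD : Effective D)
    (h : ¬ PositiveRank (⊤ : SimpleGraph (Fin n)) D) :
    ∀ i : ℕ, 1 ≤ i → i ≤ n - 1 →
      (Finset.univ.filter (fun v => (i : ℤ) ≤ D v)).card < n - i := by
  intro i hi hin
  by_contra! hS
  exact h (positiveRank_top_of_le_card_filter hD hi 
    (by rw [Fintype.card_fin]; omega) (by rwa [Fintype.card_fin]))
end

section
/- Let F be a Ferrers diagram and (x,y) ∈ ℕ² with x > 1, y > 1, and (x,y) ∉ F. Then the divisor D_{x,y} on the Ferrers rook graph R(F), defined as the sum of all vertices (x',y') ∈ F with x' ≠ x and y' ≠ y, has positive rank. -/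
open Finset

open scoped Classical

/-! If `v` is off column `x` and row `y`, `D_{x,y}` already has a chip at `v`. If `v` lies in
column `x`, fire every vertex outside that column: each vertex of column `x` gains a chip from
`(1, v.2)` (present since `F` is Ferrers and `x > 1`), while a vertex `w` outside the column loses
at most one chip, to `(x, w.2)`, which lies in `F` only when `w.2 ≠ y` because `(x, y) ∉ F`, so
that `w` carries a chip. Row `y` is the same case for the transposed diagram. -/

section ChipFiring

variable {V : Type*} [Fintype V] (G : SimpleGraph V)

def ReachesChipAt (D : V → ℤ) (v : V) : Prop :=
  ∃ D', LinEquiv G D D' ∧ Effective D' ∧ 0 < D' v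

variable {G}

lemma lap_indicator_of_mem {S : Set V} {w : V} (hw : w ∈ S) :
    lap G (S.indicator 1) w = -#{u | u ∉ S ∧ G.Adj u w} := by
  have hsplit := card_filter_add_card_filter_not (s := {u | G.Adj u w}) (· ∈ S)
  simp only [filter_filter] at hsplit
  simp [lap, Set.indicator, hw, sum_ite, filter_filter, ← hsplit, and_comm]

lemma lap_indicator_of_notMem {S : Set V} {w : V} (hw : w ∉ S) :
    lap G (S.indicator 1) w = #{u | u ∈ S ∧ G.Adj u w} := by
  simp [lap, Set.indicator, hw, sum_ite, filter_filter, and_comm]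

lemma reachesChipAt_of_effective {D : V → ℤ} {v : V} (hD : Effective D) (hv : 0 < D v) :
    ReachesChipAt G D v :=
  ⟨D, ⟨0, fun w => by simp [lap]⟩, hD, hv⟩

lemma reachesChipAt_of_fire {D : V → ℤ} (hD : Effective D) (S : Set V)
    (hS : ∀ w ∈ S, #{u | u ∉ S ∧ G.Adj u w} ≤ D w) {u v : V} (hu : u ∈ S) (hv : v ∉ S)
    (huv : G.Adj u v) : ReachesChipAt G D v := by
  refine ⟨D + lap G (S.indicator 1), ⟨S.indicator 1, fun w => rfl⟩, fun w => ?_, ?_⟩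
  · by_cases hw : w ∈ S
    · simpa [lap_indicator_of_mem hw] using hS w hw
    · simpa [lap_indicator_of_notMem hw] using add_nonneg (hD w) (Nat.cast_nonneg _)
  · have hcard : 0 < #{u | u ∈ S ∧ G.Adj u v} := card_pos.mpr ⟨u, by simp [hu, huv]⟩
    simp only [Pi.add_apply, lap_indicator_of_notMem hv]
    linarith [hD v]

variable {W : Type*} [Fintype W] {G' : SimpleGraph W}

lemma lap_apply_iso (e : G ≃g G') (f : W → ℤ) (w : V) : lap G' f (e w) = lap G (f ∘ e) w := by
  simp only [lap]
  rw [← e.toEquiv.sum_comp, ← e.toEquiv.sum_comp]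
  simp [e.map_adj_iff]

lemma ReachesChipAt.comp_iso (e : G ≃g G') {D : W → ℤ} {v : V} (h : ReachesChipAt G' D (e v)) :
    ReachesChipAt G (D ∘ e) v := by
  obtain ⟨D', ⟨f, hf⟩, hD', hv⟩ := h
  exact ⟨D' ∘ e, ⟨f ∘ e, fun w => by simp [hf, lap_apply_iso]⟩, fun w => hD' (e w), hv⟩

end ChipFiring

def transpose (F : Finset (ℕ × ℕ)) : Finset (ℕ × ℕ) :=
  F.map (Equiv.prodComm ℕ ℕ).toEmbedding

@[simp]
lemma mem_transpose {F : Finset (ℕ × ℕ)} {p : ℕ × ℕ} : p ∈ transpose F ↔ p.swap ∈ F := by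
  simp [transpose, mem_map_equiv]

lemma IsFerrers.transpose {F : Finset (ℕ × ℕ)} (hF : IsFerrers F) : IsFerrers (transpose F) := by
  intro p hp
  obtain ⟨h1, h2, h3, h4⟩ := hF _ (mem_transpose.mp hp)
  exact ⟨h2, h1, by simpa using h4, by simpa using h3⟩

lemma IsFerrers.one_mem {F : Finset (ℕ × ℕ)} (hF : IsFerrers F) {a b : ℕ} (h : (a, b) ∈ F) :
    (1, b) ∈ F := by
  induction a with
  | zero => exact absurd (hF _ h).1 (by norm_num)
  | succ n ih =>
    rcases (hF _ h).2.2.1 with h1 | h1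
    · rwa [← h1]
    · exact ih (by simpa using h1)

@[simp]
lemma rookGraph_adj {F : Finset (ℕ × ℕ)} {a b : {p // p ∈ F}} :
    (rookGraph F).Adj a b ↔
      a ≠ b ∧ ((a : ℕ × ℕ).1 = (b : ℕ × ℕ).1 ∨ (a : ℕ × ℕ).2 = (b : ℕ × ℕ).2) :=
  Iff.rfl

def rookGraphTransposeIso (F : Finset (ℕ × ℕ)) : rookGraph F ≃g rookGraph (transpose F) where
  toEquiv := (Equiv.prodComm ℕ ℕ).subtypeEquiv fun p => by simp
  map_rel_iff' := by
    intro a b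
    simp only [rookGraph_adj, ne_eq, Subtype.ext_iff, Equiv.subtypeEquiv_apply,
      Equiv.prodComm_apply, Prod.swap_inj, Prod.fst_swap, Prod.snd_swap, or_comm]

@[simp]
lemma coe_rookGraphTransposeIso (F : Finset (ℕ × ℕ)) (p : {p // p ∈ F}) :
    (rookGraphTransposeIso F p : ℕ × ℕ) = (p : ℕ × ℕ).swap :=
  rfl

lemma Dxy_transpose (F : Finset (ℕ × ℕ)) (x y : ℕ) :
    Dxy (transpose F) y x ∘ rookGraphTransposeIso F = Dxy F x y := by
  funext p
  simp [Dxy, and_comm]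

lemma effective_Dxy (F : Finset (ℕ × ℕ)) (x y : ℕ) : Effective (Dxy F x y) := by
  intro p
  unfold Dxy
  split_ifs <;> norm_num

lemma reachesChipAt_Dxy_of_fst_eq {F : Finset (ℕ × ℕ)} (hF : IsFerrers F) {x y : ℕ}
    (hx : 1 < x) (hxy : (x, y) ∉ F) {v : {p // p ∈ F}} (hv : (v : ℕ × ℕ).1 = x) :
    ReachesChipAt (rookGraph F) (Dxy F x y) v := by
  have h1 : (1, (v : ℕ × ℕ).2) ∈ F := hF.one_mem v.2
  refine reachesChipAt_of_fire (effective_Dxy F x y) {p | (p : ℕ × ℕ).1 ≠ x} (fun w hw => ?_)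
    (u := ⟨_, h1⟩) (by simp only [Set.mem_ofPred_eq]; omega) (fun h => h hv) ?_
  · have column_neighbor : ∀ u : {p // p ∈ F}, (u : ℕ × ℕ).1 = x → (rookGraph F).Adj u w →
        (u : ℕ × ℕ) = (x, (w : ℕ × ℕ).2) := by
      rintro u hu ⟨-, hu1 | hu2⟩
      · exact absurd (hu ▸ hu1).symm hw
      · exact Prod.ext hu hu2
    simp only [Set.mem_ofPred_eq, not_not] at hw ⊢
    by_cases hxw : (x, (w : ℕ × ℕ).2) ∈ F
    · have hDw : Dxy F x y w = 1 := if_pos ⟨hw, fun h => hxy (h ▸ hxw)⟩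
      rw [hDw, Nat.cast_le_one, card_le_one]
      intro a ha b hb
      simp only [mem_filter, mem_univ, true_and] at ha hb
      exact Subtype.ext ((column_neighbor a ha.1 ha.2).trans (column_neighbor b hb.1 hb.2).symm)
    · rw [card_eq_zero.mpr (filter_eq_empty_iff.mpr fun u _ hu => hxw ?_), Nat.cast_zero]
      · exact effective_Dxy F x y w
      · exact column_neighbor u hu.1 hu.2 ▸ u.2
  · simp only [rookGraph_adj, ne_eq, Subtype.ext_iff, Prod.ext_iff, and_true, or_true]
    omega

theorem stmt2 (F : Finset (ℕ × ℕ)) (hF : IsFerrers F) (x y : ℕ)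
    (hx : 1 < x) (hy : 1 < y) (hxy : (x, y) ∉ F) :
    PositiveRank (rookGraph F) (Dxy F x y) := by
  intro v
  by_cases hv1 : (v : ℕ × ℕ).1 = x
  · exact reachesChipAt_Dxy_of_fst_eq hF hx hxy hv1
  by_cases hv2 : (v : ℕ × ℕ).2 = y
  · rw [← Dxy_transpose]
    exact ReachesChipAt.comp_iso _ <|
      reachesChipAt_Dxy_of_fst_eq hF.transpose hy (by simpa using hxy) (by simpa using hv2)
  exact reachesChipAt_of_effective (effective_Dxy F x y) (by simp [Dxy, hv1, hv2])
end

section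
/- The gonality of the Ferrers rook graph R(T_3) of the staircase triangle T_3 = {(x,y) ∈ ℕ² : x,y ≥ 1, x + y ≤ 4} equals 3. -/
open Finset

open scoped Classical

/-- The staircase triangle `T_n`. -/
def Tn (n : ℕ) : Finset (ℕ × ℕ) :=
  ((Finset.Icc 1 n) ×ˢ (Finset.Icc 1 n)).filter (fun p => p.1 + p.2 ≤ n + 1)

/-!
Upper bound: `D_{3,1} = (1,2) + (1,3) + (2,2)` has positive rank: firing its support gives
`2·(1,1) + (2,1)`, and then firing everything but `(3,1)` gives `(1,1) + 2·(3,1)`.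

Lower bound: the Laplacian is symmetric, so a function `c` with `Δc ≡ 0 (mod m)` yields the
invariant `D ↦ c ⬝ᵥ D (mod m)` of linear equivalence. For `R(T₃)` there is such a `c` with
`m = 15` for which the values `c ⬝ᵥ E`, over effective `E` of degree at most two with a chip at
`v`, have no common residue for `v = (1,1), (1,2), (2,1)`; hence no divisor of degree at most two
has positive rank.
-/

open Matrix

section ChipFiring

variable {V : Type*} [Fintype V] {G : SimpleGraph V}

theorem lap_eq_sum_ite [DecidableRel G.Adj] (f : V → ℤ) (w : V) :
    lap G f w = ∑ u, if G.Adj u w then f u - f w else 0 := by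
  rw [lap, mul_sum, ← sum_sub_distrib]
  refine sum_congr rfl fun u _ => ?_
  split_ifs <;> simp

theorem lap_const (k : ℤ) (w : V) : lap G (fun _ => k) w = 0 := by
  classical
  simp [lap_eq_sum_ite]

theorem dotProduct_lap_comm (c f : V → ℤ) : c ⬝ᵥ lap G f = f ⬝ᵥ lap G c := by
  simp only [dotProduct, lap, mul_sub, mul_sum, sum_sub_distrib]
  congr 1
  · rw [sum_comm]
    exact sum_congr rfl fun u _ => sum_congr rfl fun w _ => by rw [G.adj_comm, mul_left_comm]
  · exact sum_congr rfl fun w _ => sum_congr rfl fun u _ => mul_left_comm _ _ _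

theorem sum_lap (f : V → ℤ) : ∑ w, lap G f w = 0 := by
  simpa [dotProduct, lap_const] using dotProduct_lap_comm (G := G) (fun _ => 1) f

theorem LinEquiv.degD_eq {D D' : V → ℤ} (h : LinEquiv G D D') : degD D' = degD D := by
  obtain ⟨f, hf⟩ := h
  simp only [degD, hf, sum_add_distrib, sum_lap, add_zero]

theorem LinEquiv.dotProduct_modEq {m : ℤ} {c D D' : V → ℤ} (hc : ∀ u, m ∣ lap G c u)
    (h : LinEquiv G D D') : c ⬝ᵥ D' ≡ c ⬝ᵥ D [ZMOD m] := by
  obtain ⟨f, hf⟩ := h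
  rw [show D' = D + lap G f from funext hf, dotProduct_add, dotProduct_lap_comm]
  exact Int.add_modEq_left_iff.mpr (dvd_sum fun u _ => (hc u).mul_left (f u))

end ChipFiring

section SmallDivisors

theorem Effective.eq_zero_of_degD_nonpos {V : Type*} [Fintype V] {E : V → ℤ}
    (hE : Effective E) (hdeg : degD E ≤ 0) : E = 0 := by
  have hsum : ∑ v, E v = 0 := le_antisymm hdeg (sum_nonneg fun v _ => hE v)
  funext v
  exact (sum_eq_zero_iff_of_nonneg fun v _ => hE v).mp hsum v (mem_univ v)

theorem Effective.sub_single {V : Type*} [DecidableEq V] {E : V → ℤ} (hE : Effective E) {v : V}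
    (hv : 0 < E v) : Effective (E - Pi.single v 1) := by
  intro u
  by_cases h : u = v
  · subst h
    simp only [Pi.sub_apply, Pi.single_eq_same]
    omega
  · simpa [h] using hE u

variable {V : Type*} [Fintype V] [DecidableEq V]

theorem degD_sub_single (E : V → ℤ) (v : V) : degD (E - Pi.single v 1) = degD E - 1 := by
  simp [degD, sum_sub_distrib]

/-- The values `c ⬝ᵥ E` for `E` the sum of `v` and at most one further vertex. -/
def twoChipValues (c : V → ℤ) (v : V) : Finset ℤ :=
  insert (c v) (univ.image fun u => c v + c u)

theorem dotProduct_mem_twoChipValues (c : V → ℤ) {E : V → ℤ} (hE : Effective E)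
    (hdeg : degD E ≤ 2) {v : V} (hv : 0 < E v) : c ⬝ᵥ E ∈ twoChipValues c v := by
  set E' := E - Pi.single v 1
  have hE' : Effective E' := hE.sub_single hv
  have hsplit : c ⬝ᵥ E = c v + c ⬝ᵥ E' := by simp [E', dotProduct_sub]
  by_cases hzero : E' = 0
  · simp [twoChipValues, hsplit, hzero]
  obtain ⟨u, hu0⟩ : ∃ u, E' u ≠ 0 := by simpa [funext_iff] using hzero
  have hu : 0 < E' u := lt_of_le_of_ne (hE' u) (Ne.symm hu0)
  have hrest : E' - Pi.single u 1 = 0 :=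
    (hE'.sub_single hu).eq_zero_of_degD_nonpos (by simp only [degD_sub_single, E']; omega)
  have hE'u : E' = Pi.single u 1 := sub_eq_zero.mp hrest
  simp [twoChipValues, hsplit, hE'u]

end SmallDivisors

section Staircase

instance (F : Finset (ℕ × ℕ)) : DecidableRel (rookGraph F).Adj :=
  fun a b => inferInstanceAs (Decidable (a ≠ b ∧ _))

abbrev T3 : Type := {p // p ∈ Tn 3}

def T3.mk (i j : ℕ) (h : (i, j) ∈ Tn 3 := by decide) : T3 := ⟨(i, j), h⟩

/-- A character of order 15 of the Jacobian of `R(T₃)`. -/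
def jacCharT3 (p : T3) : ℤ :=
  match (p : ℕ × ℕ) with
  | (1, 1) => -1
  | (1, 2) => 7
  | (1, 3) => 3
  | (2, 1) => 1
  | (2, 2) => 4
  | _ => 0

theorem lap_jacCharT3_dvd (u : T3) : (15 : ℤ) ∣ lap (rookGraph (Tn 3)) jacCharT3 u := by
  rw [lap_eq_sum_ite]
  revert u
  decide

theorem twoChipValues_jacCharT3_disjoint :
    ∀ x ∈ twoChipValues jacCharT3 (T3.mk 1 1), ∀ y ∈ twoChipValues jacCharT3 (T3.mk 1 2),
      ∀ z ∈ twoChipValues jacCharT3 (T3.mk 2 1),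
        ¬(x ≡ y [ZMOD 15] ∧ x ≡ z [ZMOD 15]) := by
  decide

theorem three_le_degD_of_positiveRank {D : T3 → ℤ} (hD : PositiveRank (rookGraph (Tn 3)) D) :
    3 ≤ degD D := by
  by_contra! hlt
  have hvalue : ∀ v, ∃ x ∈ twoChipValues jacCharT3 v, x ≡ jacCharT3 ⬝ᵥ D [ZMOD 15] := by
    intro v
    obtain ⟨E, hequiv, hE, hv⟩ := hD v
    exact ⟨_, dotProduct_mem_twoChipValues _ hE (by rw [hequiv.degD_eq]; omega) hv,
      hequiv.dotProduct_modEq lap_jacCharT3_dvd⟩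
  obtain ⟨x, hx, hxD⟩ := hvalue (T3.mk 1 1)
  obtain ⟨y, hy, hyD⟩ := hvalue (T3.mk 1 2)
  obtain ⟨z, hz, hzD⟩ := hvalue (T3.mk 2 1)
  exact twoChipValues_jacCharT3_disjoint x hx y hy z hz ⟨hxD.trans hyD.symm, hxD.trans hzD.symm⟩

theorem positiveRank_Dxy_three_one : PositiveRank (rookGraph (Tn 3)) (Dxy (Tn 3) 3 1) := by
  set D := Dxy (Tn 3) 3 1
  set E₁ : T3 → ℤ := Pi.single (T3.mk 1 1) 2 + Pi.single (T3.mk 2 1) 1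
  set E₂ : T3 → ℤ := Pi.single (T3.mk 1 1) 1 + Pi.single (T3.mk 3 1) 2
  have hD : LinEquiv (rookGraph (Tn 3)) D D :=
    ⟨fun _ => 0, fun w => by rw [lap_const, add_zero]⟩
  have hE₁ : LinEquiv (rookGraph (Tn 3)) D E₁ :=
    ⟨D, fun w => by rw [lap_eq_sum_ite]; revert w; decide⟩
  have hE₂ : LinEquiv (rookGraph (Tn 3)) D E₂ :=
    ⟨D - Pi.single (T3.mk 3 1) 1, fun w => by rw [lap_eq_sum_ite]; revert w; decide⟩
  have hcover : ∀ v, 0 < D v ∨ 0 < E₁ v ∨ 0 < E₂ v := by decide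
  intro v
  rcases hcover v with hv | hv | hv
  · exact ⟨D, hD, by unfold Effective D; decide, hv⟩
  · exact ⟨E₁, hE₁, by unfold Effective E₁; decide, hv⟩
  · exact ⟨E₂, hE₂, by unfold Effective E₂; decide, hv⟩

end Staircase

theorem stmt9 : IsLeast (gonSet (Tn 3)) 3 :=
  ⟨⟨Dxy (Tn 3) 3 1, positiveRank_Dxy_three_one, by decide⟩,
    fun _ ⟨_, hD, hdeg⟩ => hdeg ▸ three_le_degD_of_positiveRank hD⟩
end

section
/- Let F be a Ferrers diagram, D an effective divisor on R(F), and fix x so that every one of the first x columns of F is nonempty. If running Dhar's burning algorithm from a vertex v with D(v) = 0 burns at least one but not all vertices in some column among the first x columns, and that column has n vertices of which k are unburnt (1 ≤ k ≤ n−1), then after firing the set of unburnt vertices, that column contains at least k(n−k) ≥ n−1 chips. -/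
open Finset

open scoped Classical

/-- Dhar's burning algorithm, started at `v`: `v` burns, and a vertex `u` burns as soon
as the number of already-burnt neighbors of `u` strictly exceeds `D u`. -/
inductive Burnt {V : Type*} (G : SimpleGraph V) (D : V → ℤ) (v : V) : V → Prop
  | start : Burnt G D v v
  | step (u : V) (S : Finset V) (hS : ∀ w ∈ S, Burnt G D v w)
      (hadj : ∀ w ∈ S, G.Adj w u) (hcard : D u < (S.card : ℤ)) : Burnt G D v u

/-- Firing a set `A` of vertices: each vertex of `A` sends one chip along each edge
leaving `A`. -/
noncomputable def fireSet {V : Type*} [Fintype V] (G : SimpleGraph V) (D : V → ℤ)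
    (A : Finset V) : V → ℤ :=
  fun w =>
    if w ∈ A then D w - ((Finset.univ.filter (fun u => u ∉ A ∧ G.Adj w u)).card : ℤ)
    else D w + ((A.filter (fun u => G.Adj u w)).card : ℤ)

/-!
Every vertex of a column of `R(F)` is adjacent to all the others. After firing the unburnt
set `A`, an unburnt vertex keeps a nonnegative number of chips, since otherwise its burnt
neighbours would have set it on fire; a burnt vertex of the column receives one chip from
each of the `k` unburnt vertices of the column on top of its `D ≥ 0` chips. Hence the column
holds at least `k (n - k)` chips, and `k (n - k) - (n - 1) = (k - 1) (n - k - 1) ≥ 0`.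
-/

section Firing

variable {V : Type*} [Fintype V] (G : SimpleGraph V) (D : V → ℤ) (A : Finset V)

theorem fireSet_nonneg_of_not_burnt {v w : V} (hA : ∀ u, u ∉ A → Burnt G D v u)
    (hw : ¬ Burnt G D v w) : 0 ≤ fireSet G D A w := by
  have hwA : w ∈ A := by by_contra h; exact hw (hA w h)
  rw [fireSet, if_pos hwA, sub_nonneg]
  by_contra! h
  refine hw (Burnt.step w _ ?_ ?_ h)
  · intro u hu
    exact hA u (mem_filter.mp hu).2.1
  · intro u hu
    exact ((mem_filter.mp hu).2.2).symm

theorem card_filter_adj_le_fireSet (hD : Effective D) {w : V} (hw : w ∉ A) :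
    ((A.filter (fun u => G.Adj u w)).card : ℤ) ≤ fireSet G D A w := by
  rw [fireSet, if_neg hw]
  linarith [hD w]

theorem card_mul_card_le_sum_fireSet [DecidableEq V] (hD : Effective D) {C : Finset V}
    (hC : G.IsClique (C : Set V)) (hA : ∀ w ∈ C, w ∈ A → 0 ≤ fireSet G D A w) :
    ((C.filter (· ∈ A)).card : ℤ) * (C.filter (· ∉ A)).card ≤ ∑ w ∈ C, fireSet G D A w := by
  have hout : ∀ w ∈ C.filter (· ∉ A), ((C.filter (· ∈ A)).card : ℤ) ≤ fireSet G D A w := by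
    intro w hw
    obtain ⟨hwC, hwA⟩ := mem_filter.mp hw
    have hsub : C.filter (· ∈ A) ⊆ A.filter (fun u => G.Adj u w) := by
      intro u hu
      obtain ⟨huC, huA⟩ := mem_filter.mp hu
      exact mem_filter.mpr ⟨huA, hC huC hwC (by rintro rfl; exact hwA huA)⟩
    exact (Nat.cast_le.mpr (card_le_card hsub)).trans (card_filter_adj_le_fireSet G D A hD hwA)
  have hin : 0 ≤ ∑ w ∈ C.filter (· ∈ A), fireSet G D A w :=
    sum_nonneg fun w hw => hA w (mem_filter.mp hw).1 (mem_filter.mp hw).2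
  have hsum := card_nsmul_le_sum (C.filter (· ∉ A)) _ _ hout
  rw [nsmul_eq_mul] at hsum
  rw [← sum_filter_add_sum_filter_not C (· ∈ A)]
  linarith

end Firing

theorem rookGraph_isClique_column (F : Finset (ℕ × ℕ)) (c : ℕ) :
    (rookGraph F).IsClique (univ.filter (fun p : {p // p ∈ F} => (p : ℕ × ℕ).1 = c) : Set _) := by
  intro p hp q hq hpq
  simp only [coe_filter, mem_univ, true_and, Set.mem_ofPred_eq] at hp hq
  exact ⟨hpq, Or.inl (hp.trans hq.symm)⟩

theorem stmt13_general (F : Finset (ℕ × ℕ))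
    (D : {p // p ∈ F} → ℤ) (hD : Effective D)
    (v : {p // p ∈ F})
    (c : ℕ)
    (col : Finset {p // p ∈ F})
    (hcol : col = Finset.univ.filter (fun p : {p // p ∈ F} => (p : ℕ × ℕ).1 = c))
    (A : Finset {p // p ∈ F})
    (hA : A = Finset.univ.filter (fun p : {p // p ∈ F} => ¬ Burnt (rookGraph F) D v p))
    (n k : ℕ) (hn : n = col.card) (hk : k = (col.filter (fun p => p ∈ A)).card)
    (hk1 : 1 ≤ k) (hk2 : k ≤ n - 1) :
    ((k : ℤ) * ((n : ℤ) - k) ≤ ∑ p ∈ col, fireSet (rookGraph F) D A p) ∧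
      ((n : ℤ) - 1 ≤ (k : ℤ) * ((n : ℤ) - k)) := by
  have hburnt : ∀ u, u ∉ A → Burnt (rookGraph F) D v u := by
    intro u hu; simpa [hA] using hu
  have hcard : ((col.filter (· ∉ A)).card : ℤ) = n - k := by
    have := card_filter_add_card_filter_not (s := col) (· ∈ A)
    omega
  have hkn : (k : ℤ) + 1 ≤ n := by omega
  refine ⟨?_, by nlinarith⟩
  rw [← hcard, hk]
  refine card_mul_card_le_sum_fireSet _ D A hD (hcol ▸ rookGraph_isClique_column F c) ?_
  intro w _ hwA
  exact fireSet_nonneg_of_not_burnt _ D A hburnt (by simpa [hA] using hwA)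

theorem stmt13 (F : Finset (ℕ × ℕ)) (hF : IsFerrers F)
    (D : {p // p ∈ F} → ℤ) (hD : Effective D)
    (x : ℕ) (hcols : ∀ x', 1 ≤ x' → x' ≤ x → (x', 1) ∈ F)
    (v : {p // p ∈ F}) (hv : D v = 0)
    (c : ℕ) (hc1 : 1 ≤ c) (hc2 : c ≤ x)
    (col : Finset {p // p ∈ F})
    (hcol : col = Finset.univ.filter (fun p : {p // p ∈ F} => (p : ℕ × ℕ).1 = c))
    (A : Finset {p // p ∈ F})
    (hA : A = Finset.univ.filter (fun p : {p // p ∈ F} => ¬ Burnt (rookGraph F) D v p))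
    (n k : ℕ) (hn : n = col.card) (hk : k = (col.filter (fun p => p ∈ A)).card)
    (hk1 : 1 ≤ k) (hk2 : k ≤ n - 1) :
    ((k : ℤ) * ((n : ℤ) - k) ≤ ∑ p ∈ col, fireSet (rookGraph F) D A p) ∧
      ((n : ℤ) - 1 ≤ (k : ℤ) * ((n : ℤ) - k)) :=
  stmt13_general F D hD v c col hcol A hA n k hn hk hk1 hk2
end

section
/- On the complete graph K_n, if every vertex has fewer than n−1 chips and for each i with 1 ≤ i ≤ n−1 fewer than n−i vertices have at least i chips, then Dhar's burning algorithm started at any vertex v with zero chips burns every vertex of K_n. -/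
open Finset

open scoped Classical

/-! If burning stops at a set `B` of `k` vertices, `1 ≤ k < n`, then each of the `n - k` unburnt
vertices has at least `k` burnt neighbours in `K_n` and so holds at least `k` chips; this is
exactly what the hypothesis on the numbers of vertices with at least `i` chips forbids. -/

open Finset

theorem Burnt.card_burnt_top_le_of_not_burnt {V : Type*} [Fintype V] {D : V → ℤ} {v u : V}
    (hu : ¬ Burnt (⊤ : SimpleGraph V) D v u) :
    ((univ.filter fun w => Burnt (⊤ : SimpleGraph V) D v w).card : ℤ) ≤ D u := by
  by_contra! hlt
  refine hu (Burnt.step u _ (fun w hw => (mem_filter.1 hw).2) (fun w hw => ?_) hlt)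
  rintro rfl
  exact hu (mem_filter.1 hw).2

theorem stmt14_general (n : ℕ) (D : Fin n → ℤ)
    (h : ∀ i : ℕ, 1 ≤ i → i ≤ n - 1 →
      (Finset.univ.filter (fun v => (i : ℤ) ≤ D v)).card < n - i)
    (v : Fin n) :
    ∀ u, Burnt (⊤ : SimpleGraph (Fin n)) D v u := by
  by_contra! ⟨u, hu⟩
  set B := univ.filter fun w => Burnt (⊤ : SimpleGraph (Fin n)) D v w
  have hB_pos : 1 ≤ #B := card_pos.2 ⟨v, mem_filter.2 ⟨mem_univ v, Burnt.start⟩⟩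
  have hB_lt : #B < n := by
    have hu_notin : u ∉ B := fun hu' => hu (mem_filter.1 hu').2
    simpa using card_lt_univ_of_notMem hu_notin
  have hcompl : Bᶜ ⊆ univ.filter fun w => ((#B : ℕ) : ℤ) ≤ D w := fun w hw =>
    mem_filter.2 ⟨mem_univ w,
      Burnt.card_burnt_top_le_of_not_burnt fun hw' => mem_compl.1 hw (mem_filter.2 ⟨mem_univ w, hw'⟩)⟩
  have hmany := card_le_card hcompl
  have hfew := h #B hB_pos (by omega)
  rw [card_compl, Fintype.card_fin] at hmany
  omega

theorem stmt14 (n : ℕ) (D : Fin n → ℤ) (hD : Effective D)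
    (hmax : ∀ v, D v < (n : ℤ) - 1)
    (h : ∀ i : ℕ, 1 ≤ i → i ≤ n - 1 →
      (Finset.univ.filter (fun v => (i : ℤ) ≤ D v)).card < n - i)
    (v : Fin n) (hv : D v = 0) :
    ∀ u, Burnt (⊤ : SimpleGraph (Fin n)) D v u :=
  stmt14_general n D h v
end
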